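/- arXiv:1603.04136 — 2 statements merged into one kernel-verified Lean document; each statement's English description precedes it below -/
import Mathlib

section
/- Let J : ℝ^M → ℝ be twice continuously differentiable with ν I_M ≤ ∇²J(w) ≤ δ I_M for all w (0 < ν ≤ δ) and unique minimizer w° (∇J(w°) = 0). Let β₁, β₂ ∈ [0,1) satisfy β₁ + β₂ = β ∈ [0,1) and β₁β₂ = 0, and consider the momentum recursion ψ_{i-1} = w_{i-1} + β₁(w_{i-1} − w_{i-2}), w_i = ψ_{i-1} − μ_m(∇J(ψ_{i-1}) + s_i(ψ_{i-1})) + β₂(ψ_{i-1} − ψ_{i-2}). Define the error vectors w̃_i = w° − w_i and ψ̃_i = w° − ψ_i, the transformed errors ŵ_i = (w̃_i − β w̃_{i-1})/(1−β) and w̌_i = (w̃_i − w̃_{i-1})/(1−β), the constant β' = ββ₁ + β₂, and the random matrix H_{i-1} = ∫₀¹ ∇²J(w° − t ψ̃_{i-1}) dt. Then for every i ≥ 0 the following exact identities hold: ŵ_i = (I_M − (μ_m/(1−β)) H_{i-1}) ŵ_{i-1} + (μ_m β'/(1−β)) H_{i-1} w̌_{i-1} + (μ_m/(1−β)) s_i(ψ_{i-1}),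 and w̌_i = −(μ_m/(1−β)) H_{i-1} ŵ_{i-1} + (β I_M + (μ_m β'/(1−β)) H_{i-1}) w̌_{i-1} + (μ_m/(1−β)) s_i(ψ_{i-1}). -/
/-!
Both admissible momentum schemes (`β₁ = 0`: heavy ball, `β₂ = 0`: Nesterov) collapse to the
heavy-ball recursion `w_i = w_{i-1} + β (w_{i-1} - w_{i-2}) - μ (∇J(ψ_{i-1}) + s_i)`. The
fundamental theorem of calculus along the segment from `ψ_{i-1}` to `w°` gives
`∇J(ψ_{i-1}) = -H_{i-1} ψ̃_{i-1}`, and `β₁ β₂ = 0` is exactly what makes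
`ψ̃_{i-1} = ŵ_{i-1} - β' w̌_{i-1}`. The two identities are then linear algebra.
-/

open MeasureTheory Filter intervalIntegral
open scoped RealInnerProductSpace

noncomputable section

abbrev Vec (M : ℕ) := EuclideanSpace ℝ (Fin M)

theorem ContDiff.gradient {E : Type*} [NormedAddCommGroup E] [InnerProductSpace ℝ E]
    [CompleteSpace E] {f : E → ℝ} {n : WithTop ℕ∞} (hf : ContDiff ℝ (n + 1) f) :
    ContDiff ℝ n (gradient f) :=
  (InnerProductSpace.toDual ℝ E).symm.contDiff.comp (hf.fderiv_right le_rfl)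

theorem ContDiff.intervalIntegral_fderiv_segment_apply {E F : Type*} [NormedAddCommGroup E]
    [NormedSpace ℝ E] [NormedAddCommGroup F] [NormedSpace ℝ F] [CompleteSpace F] {g : E → F}
    (hg : ContDiff ℝ 1 g) (x y : E) :
    (∫ t in (0:ℝ)..1, fderiv ℝ g (x - t • (x - y))) (x - y) = g x - g y := by
  have hpath (t : ℝ) : HasDerivAt (fun t : ℝ => x - t • (x - y)) (-(x - y)) t := by
    simpa using ((hasDerivAt_id t).smul_const (x - y)).const_sub x
  have hDg : Continuous fun t : ℝ => fderiv ℝ g (x - t • (x - y)) :=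
    (hg.continuous_fderiv one_ne_zero).comp (by fun_prop)
  have hFTC : ∫ t in (0:ℝ)..1, fderiv ℝ g (x - t • (x - y)) (-(x - y)) = g y - g x := by
    rw [integral_eq_sub_of_hasDerivAt
      (fun t _ => (hg.differentiable one_ne_zero _).hasFDerivAt.comp_hasDerivAt t (hpath t))
      ((hDg.clm_apply continuous_const).intervalIntegrable 0 1)]
    simp
  calc (∫ t in (0:ℝ)..1, fderiv ℝ g (x - t • (x - y))) (x - y)
      = -∫ t in (0:ℝ)..1, fderiv ℝ g (x - t • (x - y)) (-(x - y)) := by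
        simp only [ContinuousLinearMap.intervalIntegral_apply (hDg.intervalIntegrable 0 1),
          map_neg, intervalIntegral.integral_neg, neg_neg]
    _ = g x - g y := by rw [hFTC, neg_sub]

theorem momentum_eq_heavyBall {E : Type*} [AddCommGroup E] [Module ℝ E] {G : E → E}
    {s w ψ : ℤ → E} {β β₁ β₂ μ : ℝ} (hsum : β₁ + β₂ = β) (hprod : β₁ * β₂ = 0)
    (hinit : ψ (-2) = w (-2)) (hψ : ∀ i : ℤ, -1 ≤ i → ψ i = w i + β₁ • (w i - w (i - 1)))
    (hw : ∀ i : ℤ, 0 ≤ i →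
      w i = ψ (i - 1) - μ • (G (ψ (i - 1)) + s i) + β₂ • (ψ (i - 1) - ψ (i - 2)))
    {i : ℤ} (hi : 0 ≤ i) :
    w i = w (i - 1) + β • (w (i - 1) - w (i - 2)) - μ • (G (ψ (i - 1)) + s i) := by
  rcases mul_eq_zero.mp hprod with rfl | rfl
  · have hψw (j : ℤ) (hj : -2 ≤ j) : ψ j = w j := by
      obtain rfl | hj : j = -2 ∨ -1 ≤ j := by omega
      · exact hinit
      · simpa using hψ j hj
    rw [hw i hi, hψw (i - 1) (by omega), hψw (i - 2) (by omega), ← hsum]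
    module
  · rw [hw i hi, hψ (i - 1) (by omega), show i - 1 - 1 = i - 2 by ring, ← hsum]
    module

theorem lookahead_error_eq_hat_sub_smul_check {E : Type*} [AddCommGroup E] [Module ℝ E] {β β₁ β₂ : ℝ}
    (hβ : β ≠ 1) (hsum : β₁ + β₂ = β) (hprod : β₁ * β₂ = 0) (a b : E) :
    a + β₁ • (a - b) = (1 - β)⁻¹ • (a - β • b) - (β * β₁ + β₂) • (1 - β)⁻¹ • (a - b) := by
  have hβ' : 1 - β ≠ 0 := sub_ne_zero.mpr hβ.symm
  rcases mul_eq_zero.mp hprod with rfl | rfl <;> subst hsum <;>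
    match_scalars <;> field_simp <;> ring

theorem transformed_errors_step {E : Type*} [NormedAddCommGroup E] [NormedSpace ℝ E]
    (H : E →L[ℝ] E) {β β' μ : ℝ} {e₀ e₁ e₂ v : E}
    (h : e₀ = e₁ + β • (e₁ - e₂)
      - μ • H ((1 - β)⁻¹ • (e₁ - β • e₂) - β' • (1 - β)⁻¹ • (e₁ - e₂)) + μ • v) :
    (1 - β)⁻¹ • (e₀ - β • e₁) = (1 - β)⁻¹ • (e₁ - β • e₂)
        - (μ / (1 - β)) • H ((1 - β)⁻¹ • (e₁ - β • e₂))
        + (μ * β' / (1 - β)) • H ((1 - β)⁻¹ • (e₁ - e₂)) + (μ / (1 - β)) • v ∧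
      (1 - β)⁻¹ • (e₀ - e₁) = -((μ / (1 - β)) • H ((1 - β)⁻¹ • (e₁ - β • e₂)))
        + β • ((1 - β)⁻¹ • (e₁ - e₂))
        + (μ * β' / (1 - β)) • H ((1 - β)⁻¹ • (e₁ - e₂)) + (μ / (1 - β)) • v := by
  simp only [h, map_sub, map_smul]
  constructor <;> match_scalars <;> ring

theorem momentum_extended_recursion_general
    {M : ℕ}
    (J : Vec M → ℝ) (hJ : ContDiff ℝ 2 J)
    (wo : Vec M) (hgrad0 : gradient J wo = 0)
    (β β₁ β₂ : ℝ)
    (hβ1 : β < 1)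
    (hsum : β₁ + β₂ = β) (hprod : β₁ * β₂ = 0)
    (μm : ℝ)
    (s : ℤ → Vec M)
    (w ψ : ℤ → Vec M)
    (hinit : ψ (-2) = w (-2))
    (hψ : ∀ i : ℤ, -1 ≤ i → ψ i = w i + β₁ • (w i - w (i - 1)))
    (hw : ∀ i : ℤ, 0 ≤ i →
      w i = ψ (i - 1) - μm • (gradient J (ψ (i - 1)) + s i)
        + β₂ • (ψ (i - 1) - ψ (i - 2))) :
    ∀ i : ℤ, 0 ≤ i →
      (let hatw : ℤ → Vec M :=
        fun j => (1 - β)⁻¹ • ((wo - w j) - β • (wo - w (j - 1)));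
      let chkw : ℤ → Vec M :=
        fun j => (1 - β)⁻¹ • ((wo - w j) - (wo - w (j - 1)));
      let H : Vec M →L[ℝ] Vec M :=
        ∫ t in (0:ℝ)..1, fderiv ℝ (gradient J) (wo - t • (wo - ψ (i - 1)));
      hatw i = hatw (i - 1) - (μm / (1 - β)) • H (hatw (i - 1))
          + (μm * (β * β₁ + β₂) / (1 - β)) • H (chkw (i - 1))
          + (μm / (1 - β)) • s i ∧
      chkw i = -((μm / (1 - β)) • H (hatw (i - 1))) + β • chkw (i - 1)
          + (μm * (β * β₁ + β₂) / (1 - β)) • H (chkw (i - 1))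
          + (μm / (1 - β)) • s i) := by
  intro i hi hatw chkw H
  have hψerr : wo - ψ (i - 1) = (1 - β)⁻¹ • ((wo - w (i - 1)) - β • (wo - w (i - 2)))
      - (β * β₁ + β₂) • (1 - β)⁻¹ • ((wo - w (i - 1)) - (wo - w (i - 2))) := by
    rw [← lookahead_error_eq_hat_sub_smul_check hβ1.ne hsum hprod, hψ (i - 1) (by omega),
      show i - 1 - 1 = i - 2 by ring]
    module
  have hHψ : H (wo - ψ (i - 1)) = -gradient J (ψ (i - 1)) := by
    rw [(ContDiff.gradient hJ).intervalIntegral_fderiv_segment_apply, hgrad0, zero_sub]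
  simp only [hatw, chkw, show i - 1 - 1 = i - 2 by ring]
  refine transformed_errors_step H ?_
  rw [← hψerr, hHψ, momentum_eq_heavyBall hsum hprod hinit hψ hw hi]
  module

/-- extended recursion / Lemma 3 of the paper: the momentum
recursion, written in the transformed variables
`ŵ_i = (w̃_i − β w̃_{i-1})/(1−β)`, `w̌_i = (w̃_i − w̃_{i-1})/(1−β)`
(with `w̃_i = w° − w_i`), satisfies the exact first-order identities
`ŵ_i = (I − (μ_m/(1−β))H_{i-1}) ŵ_{i-1} + (μ_m β'/(1−β)) H_{i-1} w̌_{i-1}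
       + (μ_m/(1−β)) s_i`, and
`w̌_i = −(μ_m/(1−β)) H_{i-1} ŵ_{i-1} + (β I + (μ_m β'/(1−β)) H_{i-1}) w̌_{i-1}
       + (μ_m/(1−β)) s_i`,
where `β' = ββ₁ + β₂` and `H_{i-1} = ∫₀¹ ∇²J(w° − t ψ̃_{i-1}) dt`. -/
theorem momentum_extended_recursion
    {M : ℕ} (hM : 0 < M)
    (J : Vec M → ℝ) (hJ : ContDiff ℝ 2 J)
    (ν δ : ℝ) (hν : 0 < ν) (hνδ : ν ≤ δ)
    (hHess : ∀ w v : Vec M,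
      ν * ‖v‖ ^ 2 ≤ ⟪fderiv ℝ (gradient J) w v, v⟫ ∧
      ⟪fderiv ℝ (gradient J) w v, v⟫ ≤ δ * ‖v‖ ^ 2)
    (wo : Vec M) (hmin : ∀ w, J wo ≤ J w) (hgrad0 : gradient J wo = 0)
    (β β₁ β₂ : ℝ)
    (hβ₁0 : 0 ≤ β₁) (hβ₁1 : β₁ < 1) (hβ₂0 : 0 ≤ β₂) (hβ₂1 : β₂ < 1)
    (hβ0 : 0 ≤ β) (hβ1 : β < 1)
    (hsum : β₁ + β₂ = β) (hprod : β₁ * β₂ = 0)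
    (μm : ℝ) (hμm : 0 < μm)
    (s : ℤ → Vec M)
    (w ψ : ℤ → Vec M)
    (hinit : ψ (-2) = w (-2))
    (hψ : ∀ i : ℤ, -1 ≤ i → ψ i = w i + β₁ • (w i - w (i - 1)))
    (hw : ∀ i : ℤ, 0 ≤ i →
      w i = ψ (i - 1) - μm • (gradient J (ψ (i - 1)) + s i)
        + β₂ • (ψ (i - 1) - ψ (i - 2))) :
    ∀ i : ℤ, 0 ≤ i →
      (let hatw : ℤ → Vec M :=
        fun j => (1 - β)⁻¹ • ((wo - w j) - β • (wo - w (j - 1)));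
      let chkw : ℤ → Vec M :=
        fun j => (1 - β)⁻¹ • ((wo - w j) - (wo - w (j - 1)));
      let H : Vec M →L[ℝ] Vec M :=
        ∫ t in (0:ℝ)..1, fderiv ℝ (gradient J) (wo - t • (wo - ψ (i - 1)));
      hatw i = hatw (i - 1) - (μm / (1 - β)) • H (hatw (i - 1))
          + (μm * (β * β₁ + β₂) / (1 - β)) • H (chkw (i - 1))
          + (μm / (1 - β)) • s i ∧
      chkw i = -((μm / (1 - β)) • H (hatw (i - 1))) + β • chkw (i - 1)
          + (μm * (β * β₁ + β₂) / (1 - β)) • H (chkw (i - 1))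
          + (μm / (1 - β)) • s i) :=
  momentum_extended_recursion_general J hJ wo hgrad0 β β₁ β₂ hβ1 hsum hprod μm s w ψ hinit hψ hw

end
end

section
/- For all real numbers x₁ and x₂: | e^{x₁}/(1 + e^{x₁})² − e^{x₂}/(1 + e^{x₂})² | ≤ | tanh((x₂ − x₁)/2) | ≤ |x₂ − x₁| / 2. In other words, the logistic sigmoid derivative x ↦ e^{x}/(1+e^{x})² satisfies a pointwise difference bound by the hyperbolic tangent of the half-difference, and hence is (1/2)-Lipschitz. -/
/-!
Put `u = e^{x₁}` and `v = e^{x₂}`. Then `tanh ((x₂ - x₁) / 2) = (v - u) / (v + u)`, while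
`u / (1 + u)^2 - v / (1 + v)^2 = (u - v) (1 - u v) / ((1 + u) (1 + v))^2`, so the first bound
reduces to `|1 - u v| (u + v) ≤ ((1 + u) (1 + v))^2`, which holds for positive `u, v`.
The second bound is `tanh t ≤ t` for `t ≥ 0`, i.e. `sinh t ≤ t cosh t`: the difference
`t cosh t - sinh t` vanishes at `0` and has derivative `t sinh t ≥ 0`.
-/

namespace Real

lemma sinh_le_mul_cosh {y : ℝ} (hy : 0 ≤ y) : sinh y ≤ y * cosh y := by
  have hderiv (t : ℝ) : HasDerivAt (fun t ↦ t * cosh t - sinh t) (t * sinh t) t := by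
    have h : HasDerivAt (fun t ↦ t * cosh t - sinh t) (1 * cosh t + t * sinh t - cosh t) t :=
      ((hasDerivAt_id' t).mul (hasDerivAt_cosh t)).sub (hasDerivAt_sinh t)
    rwa [one_mul, add_sub_cancel_left] at h
  have hmono : MonotoneOn (fun t ↦ t * cosh t - sinh t) (Set.Ici 0) := by
    refine monotoneOn_of_hasDerivWithinAt_nonneg (convex_Ici 0)
      (fun t _ ↦ (hderiv t).continuousAt.continuousWithinAt)
      (fun t _ ↦ (hderiv t).hasDerivWithinAt) fun t ht ↦ ?_
    rw [interior_Ici] at ht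
    exact mul_nonneg ht.le (sinh_nonneg_iff.mpr ht.le)
  simpa using hmono Set.self_mem_Ici hy hy

lemma tanh_le_self {y : ℝ} (hy : 0 ≤ y) : tanh y ≤ y := by
  rw [tanh_eq_sinh_div_cosh, div_le_iff₀ (cosh_pos y)]
  exact sinh_le_mul_cosh hy

lemma abs_tanh_le_abs (y : ℝ) : |tanh y| ≤ |y| := by
  wlog hy : 0 ≤ y generalizing y
  · simpa using this (-y) (by linarith)
  have htanh : 0 ≤ tanh y := by
    rw [tanh_eq_sinh_div_cosh]
    exact div_nonneg (sinh_nonneg_iff.mpr hy) (cosh_pos y).le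
  rw [abs_of_nonneg htanh, abs_of_nonneg hy]
  exact tanh_le_self hy

lemma tanh_half_sub (x y : ℝ) : tanh ((y - x) / 2) = (exp y - exp x) / (exp y + exp x) := by
  rw [tanh_eq, ← mul_div_mul_right _ _ (exp_pos ((x + y) / 2)).ne', sub_mul, add_mul,
    ← exp_add, ← exp_add]
  ring_nf

end Real

lemma abs_div_one_add_sq_sub_div_one_add_sq_le {u v : ℝ} (hu : 0 < u) (hv : 0 < v) :
    |u / (1 + u) ^ 2 - v / (1 + v) ^ 2| ≤ |v - u| / (v + u) := by
  have hdiff : u / (1 + u) ^ 2 - v / (1 + v) ^ 2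
      = (u - v) * (1 - u * v) / ((1 + u) * (1 + v)) ^ 2 := by
    field_simp
    ring
  have hprod : |1 - u * v| ≤ 1 + u * v := abs_le.mpr ⟨by nlinarith, by nlinarith⟩
  have hden : 0 < ((1 + u) * (1 + v)) ^ 2 := by positivity
  rw [hdiff, abs_div, abs_mul, abs_of_pos hden, abs_sub_comm,
    div_le_div_iff₀ hden (by positivity), mul_assoc]
  gcongr
  calc |1 - u * v| * (v + u) ≤ (1 + u * v) * (v + u) := by gcongr
    _ ≤ ((1 + u) * (1 + v)) ^ 2 := by nlinarith [mul_pos hu hv]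

/-- For all real `x₁ x₂`,
`|e^{x₁}/(1+e^{x₁})² − e^{x₂}/(1+e^{x₂})²| ≤ |tanh((x₂−x₁)/2)| ≤ |x₂−x₁|/2`. -/
theorem logistic_sigmoid_derivative_tanh_bound (x₁ x₂ : ℝ) :
    |Real.exp x₁ / (1 + Real.exp x₁) ^ 2 - Real.exp x₂ / (1 + Real.exp x₂) ^ 2| ≤
      |Real.tanh ((x₂ - x₁) / 2)| ∧
    |Real.tanh ((x₂ - x₁) / 2)| ≤ |x₂ - x₁| / 2 := by
  refine ⟨?_, ?_⟩
  · rw [Real.tanh_half_sub, abs_div, abs_of_pos (by positivity : 0 < Real.exp x₂ + Real.exp x₁)]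
    exact abs_div_one_add_sq_sub_div_one_add_sq_le (Real.exp_pos x₁) (Real.exp_pos x₂)
  · simpa [abs_div] using Real.abs_tanh_le_abs ((x₂ - x₁) / 2)
end
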